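/- Let (A,Q) be a finite quadratic module. Then (∑_{x∈A} e(Q(x)))·(∑_{x∈A} e(−Q(x))) = |A|. In particular the Gauss sum ∑_{x∈A} e(Q(x)) is nonzero and has absolute value √|A|. -/

import Mathlib

open Finset

noncomputable def qe (q : AddCircle (1 : ℚ)) : ℂ :=
  Complex.exp (2 * (Real.pi : ℂ) * Complex.I * ((q.out : ℚ) : ℂ))

/-- `(A, Q)` is a finite quadratic module: `Q` is a nondegenerate quadratic form
with values in `ℚ/ℤ`. -/
def IsFQM {A : Type*} [AddCommGroup A] (Q : A → AddCircle (1 : ℚ)) : Prop :=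
  (∀ (n : ℤ) (x : A), Q (n • x) = n ^ 2 • Q x) ∧
  (∀ x x' y : A,
      Q (x + x' + y) - Q (x + x') - Q y =
        (Q (x + y) - Q x - Q y) + (Q (x' + y) - Q x' - Q y)) ∧
  (∀ x : A, (∀ y : A, Q (x + y) - Q x - Q y = 0) → x = 0)

/-- The standard basis vector `𝔢_x` of `ℂ[A]`. -/
noncomputable def indic {A : Type*} [DecidableEq A] (x : A) : A → ℂ :=
  fun y => if y = x then 1 else 0

/-- The Weil representation operator `T`. -/
noncomputable def weilT {A : Type*} [AddCommGroup A] [Fintype A]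
    (Q : A → AddCircle (1 : ℚ)) : (A → ℂ) →ₗ[ℂ] (A → ℂ) where
  toFun v := fun x => qe (Q x) * v x
  map_add' u v := by funext x; simp [mul_add]
  map_smul' c v := by funext x; simp [smul_eq_mul]; ring

/-- The Weil representation operator `S`. -/
noncomputable def weilS {A : Type*} [AddCommGroup A] [Fintype A]
    (Q : A → AddCircle (1 : ℚ)) : (A → ℂ) →ₗ[ℂ] (A → ℂ) where
  toFun v := fun y =>
    ((Fintype.card A : ℂ)⁻¹ * ∑ z, qe (-(Q z))) *
      ∑ x, qe (-(Q (x + y) - Q x - Q y)) * v x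
  map_add' u v := by
    funext y
    simp only [Pi.add_apply, mul_add, Finset.sum_add_distrib]
  map_smul' c v := by
    funext y
    simp only [Pi.smul_apply, smul_eq_mul, RingHom.id_apply, Finset.mul_sum]
    exact Finset.sum_congr rfl fun x _ => by ring

/-- The space of invariants of the Weil representation. -/
noncomputable def weilInv {A : Type*} [AddCommGroup A] [Fintype A]
    (Q : A → AddCircle (1 : ℚ)) : Submodule ℂ (A → ℂ) where
  carrier := {v | weilS Q v = v ∧ weilT Q v = v}
  add_mem' := by
    rintro u v ⟨hu1, hu2⟩ ⟨hv1, hv2⟩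
    exact ⟨by rw [map_add, hu1, hv1], by rw [map_add, hu2, hv2]⟩
  zero_mem' := ⟨map_zero _, map_zero _⟩
  smul_mem' := by
    rintro c v ⟨h1, h2⟩
    exact ⟨by rw [map_smul, h1], by rw [map_smul, h2]⟩

/-- `N` is the level of `(A,Q)`. -/
def IsLvl {A : Type*} [AddCommGroup A] (Q : A → AddCircle (1 : ℚ)) (N : ℕ) : Prop :=
  0 < N ∧ (∀ x, N • Q x = 0) ∧ ∀ M : ℕ, 0 < M → (∀ x, M • Q x = 0) → N ≤ M

/-! Substituting `x = z + y` turns the product into `∑_z e(Q z) ∑_y e(B(z, y))`. By nondegeneracy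
`y ↦ e(B(z, y))` is a nontrivial character of `A` for `z ≠ 0`, so its sum vanishes and only `z = 0`
contributes, giving `|A|`. As `e(-Q x)` is the conjugate of `e(Q x)`, the product is the squared
absolute value of the Gauss sum. -/

lemma qe_coe (r : ℚ) :
    qe r = Complex.exp (2 * (Real.pi : ℂ) * Complex.I * (r : ℂ)) := by
  obtain ⟨k, hk⟩ := AddSubgroup.mem_zmultiples_iff.1 <|
    QuotientAddGroup.eq_iff_sub_mem.1 (Quotient.out_eq' (r : AddCircle (1 : ℚ)))
  have hout : (((r : AddCircle (1 : ℚ)).out : ℚ) : ℂ) = r + k := by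
    rw [zsmul_eq_mul, mul_one] at hk
    exact_mod_cast (by linarith : ((r : AddCircle (1 : ℚ)).out : ℚ) = r + k)
  rw [qe, hout, mul_add, Complex.exp_add, mul_comm _ (k : ℂ),
    Complex.exp_int_mul_two_pi_mul_I, mul_one]

lemma qe_add (a b : AddCircle (1 : ℚ)) : qe (a + b) = qe a * qe b := by
  rw [← Quotient.out_eq' a, ← Quotient.out_eq' b, ← AddCircle.coe_add, qe_coe, qe_coe, qe_coe]
  push_cast
  rw [mul_add, Complex.exp_add]

lemma qe_zero : qe 0 = 1 := by
  simpa using qe_coe 0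

lemma qe_neg (a : AddCircle (1 : ℚ)) : qe (-a) = starRingEnd ℂ (qe a) := by
  rw [← Quotient.out_eq' a, ← AddCircle.coe_neg, qe_coe, qe_coe, ← Complex.exp_conj]
  simp only [map_mul, Complex.conj_I, map_ofNat, Complex.conj_ofReal, map_ratCast]
  push_cast
  ring_nf

lemma qe_eq_one_iff {a : AddCircle (1 : ℚ)} : qe a = 1 ↔ a = 0 := by
  refine ⟨fun h => ?_, fun h => h ▸ qe_zero⟩
  obtain ⟨n, hn⟩ := Complex.exp_eq_one_iff.1 h
  have hπ : 2 * (Real.pi : ℂ) * Complex.I ≠ 0 := by simp [Real.pi_ne_zero]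
  have hout : (a.out : ℚ) = n := by
    exact_mod_cast mul_left_cancel₀ hπ (hn.trans (mul_comm _ _))
  rw [← Quotient.out_eq' a, hout]
  exact (AddCircle.coe_eq_zero_iff _).2 ⟨n, by simp⟩

noncomputable def qeChar : AddChar (AddCircle (1 : ℚ)) ℂ where
  toFun := qe
  map_zero_eq_one' := qe_zero
  map_add_eq_mul' := qe_add

namespace IsFQM

variable {A : Type*} [AddCommGroup A] {Q : A → AddCircle (1 : ℚ)}

lemma map_zero (hQ : IsFQM Q) : Q 0 = 0 := by
  simpa using hQ.1 0 0

lemma polar_add_right (hQ : IsFQM Q) (z y y' : A) :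
    Q (z + (y + y')) - Q z - Q (y + y') =
      (Q (z + y) - Q z - Q y) + (Q (z + y') - Q z - Q y') := by
  have h := hQ.2.1 y y' z
  rw [add_comm (y + y'), add_comm y z, add_comm y' z] at h
  rw [sub_right_comm, h]
  abel

/-- The bilinear form `B(z, ·)` associated with `Q`. -/
def polar (hQ : IsFQM Q) (z : A) : A →+ AddCircle (1 : ℚ) where
  toFun y := Q (z + y) - Q z - Q y
  map_zero' := by simp [hQ.map_zero]
  map_add' := hQ.polar_add_right z

lemma sum_qe_polar_eq_zero [Fintype A] (hQ : IsFQM Q) {z : A} (hz : z ≠ 0) :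
    ∑ y, qe (Q (z + y) - Q z - Q y) = 0 := by
  refine (AddChar.sum_eq_zero_iff_ne_zero (ψ := qeChar.compAddMonoidHom (hQ.polar z))).2 ?_
  intro hψ
  refine hz (hQ.2.2 z fun y => qe_eq_one_iff.1 ?_)
  exact AddChar.eq_zero_iff.1 hψ y

theorem sum_qe_mul_sum_qe_neg [Fintype A] (hQ : IsFQM Q) :
    (∑ x, qe (Q x)) * (∑ x, qe (-(Q x))) = Fintype.card A := by
  calc (∑ x, qe (Q x)) * (∑ x, qe (-(Q x)))
      = ∑ y, ∑ z, qe (Q (z + y)) * qe (-(Q y)) := by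
        rw [sum_mul_sum, sum_comm]
        exact sum_congr rfl fun y _ =>
          (Equiv.sum_comp (Equiv.addRight y) fun x => qe (Q x) * qe (-(Q y))).symm
    _ = ∑ z, qe (Q z) * ∑ y, qe (Q (z + y) - Q z - Q y) := by
        rw [sum_comm]
        refine sum_congr rfl fun z _ => ?_
        rw [mul_sum]
        refine sum_congr rfl fun y _ => ?_
        rw [← qe_add, ← qe_add]
        congr 1
        abel
    _ = Fintype.card A := by
        rw [Fintype.sum_eq_single 0 fun z hz => by rw [hQ.sum_qe_polar_eq_zero hz, mul_zero]]
        simp [hQ.map_zero, qe_zero]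

end IsFQM

/-- `(∑ e(Q(x)))·(∑ e(-Q(x))) = |A|`; in particular the Gauss sum of a finite
quadratic module is nonzero, of absolute value `√|A|`. -/
theorem stmt15 {A : Type*} [AddCommGroup A] [Fintype A]
    (Q : A → AddCircle (1 : ℚ)) (hQ : IsFQM Q) :
    (∑ x, qe (Q x)) * (∑ x, qe (-(Q x))) = (Fintype.card A : ℂ) ∧
    (∑ x, qe (Q x)) ≠ 0 ∧
    ‖∑ x, qe (Q x)‖ = Real.sqrt (Fintype.card A) := by
  have hmul := hQ.sum_qe_mul_sum_qe_neg
  have hnormSq : Complex.normSq (∑ x, qe (Q x)) = Fintype.card A := by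
    have h := hmul
    simp only [qe_neg, ← map_sum, Complex.mul_conj] at h
    exact_mod_cast h
  refine ⟨hmul, fun h => ?_, by rw [Complex.norm_def, hnormSq]⟩
  rw [h, map_zero] at hnormSq
  exact Fintype.card_ne_zero (by exact_mod_cast hnormSq.symm)
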